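/- For real symmetric positive semi-definite matrices A and B, tr((A^{1/2} B A^{1/2})^{1/2}) ≥ tr(B^{1/2} A^{1/2}). -/

import Mathlib

/-!
With `X = B^{1/2} A^{1/2}` we have `A^{1/2} B A^{1/2} = Xᴴ X`, so the left-hand side is the sum
of the square roots `√λᵢ` of the eigenvalues of `Xᴴ X`. Computing `tr X = ∑ ⟪vᵢ, X vᵢ⟫` in an
orthonormal eigenbasis `vᵢ` of `Xᴴ X`, where `‖X vᵢ‖ = √λᵢ`, Cauchy–Schwarz bounds each term by
`√λᵢ`.
-/

open Classical Matrix

/-- The positive semidefinite square root of a real matrix (junk value `0` if not PSD). -/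
noncomputable def psdSqrt {n : ℕ} (A : Matrix (Fin n) (Fin n) ℝ) : Matrix (Fin n) (Fin n) ℝ :=
  if h : A.PosSemidef then
    (h.1.eigenvectorUnitary : Matrix (Fin n) (Fin n) ℝ) *
      diagonal ((↑) ∘ (√·) ∘ h.1.eigenvalues) *
      (star (h.1.eigenvectorUnitary : Matrix (Fin n) (Fin n) ℝ))
  else 0

open scoped InnerProductSpace MatrixOrder

namespace Matrix

variable {𝕜 m n ι : Type*} [RCLike 𝕜] [Fintype m] [Fintype n] [DecidableEq n] [Fintype ι]

lemma trace_eq_sum_inner (X : Matrix n n 𝕜) (b : OrthonormalBasis ι 𝕜 (EuclideanSpace 𝕜 n)) :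
    X.trace = ∑ i, ⟪b i, toEuclideanLin X (b i)⟫_𝕜 := by
  rw [← LinearMap.trace_eq_sum_inner, ← trace_toLin_eq X (PiLp.basisFun 2 𝕜 n),
    ← toLpLin_eq_toLin]

lemma norm_sq_toEuclideanLin (X : Matrix m n 𝕜) (v : EuclideanSpace 𝕜 n) :
    ‖toEuclideanLin X v‖ ^ 2 = RCLike.re (star (v : n → 𝕜) ⬝ᵥ (Xᴴ * X) *ᵥ v) := by
  rw [← inner_self_eq_norm_sq (𝕜 := 𝕜), EuclideanSpace.inner_eq_star_dotProduct, ofLp_toLpLin,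
    toLin'_apply, dotProduct_comm, star_mulVec, ← mulVec_mulVec, ← dotProduct_mulVec]

lemma norm_toEuclideanLin_eigenvectorBasis (X : Matrix m n 𝕜) (i : n) :
    ‖toEuclideanLin X ((isHermitian_conjTranspose_mul_self X).eigenvectorBasis i)‖ =
      √((isHermitian_conjTranspose_mul_self X).eigenvalues i) := by
  rw [(isHermitian_conjTranspose_mul_self X).eigenvalues_eq, ← norm_sq_toEuclideanLin,
    Real.sqrt_sq (norm_nonneg _)]

theorem re_trace_le_sum_sqrt_eigenvalues (X : Matrix n n 𝕜) :
    RCLike.re X.trace ≤ ∑ i, √((isHermitian_conjTranspose_mul_self X).eigenvalues i) := by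
  set b := (isHermitian_conjTranspose_mul_self X).eigenvectorBasis
  rw [trace_eq_sum_inner X b, map_sum]
  gcongr with i
  calc RCLike.re ⟪b i, toEuclideanLin X (b i)⟫_𝕜 ≤ ‖b i‖ * ‖toEuclideanLin X (b i)‖ :=
        re_inner_le_norm _ _
    _ = _ := by rw [b.norm_eq_one, one_mul, norm_toEuclideanLin_eigenvectorBasis]

end Matrix

namespace CFC

variable {A : Type*} [PartialOrder A] [NonUnitalRing A] [TopologicalSpace A] [StarRing A]
  [Module ℝ A] [SMulCommClass ℝ A A] [IsScalarTower ℝ A A] [StarOrderedRing A]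
  [NonUnitalContinuousFunctionalCalculus ℝ A IsSelfAdjoint] [NonnegSpectrumClass ℝ A]
  [IsSemitopologicalRing A] [T2Space A]

lemma sqrt_mul_mul_sqrt_eq_star_mul_self (a b : A) (hb : 0 ≤ b := by cfc_tac) :
    sqrt a * b * sqrt a = star (sqrt b * sqrt a) * (sqrt b * sqrt a) := by
  rw [star_mul, (sqrt_nonneg a).isSelfAdjoint.star_eq, (sqrt_nonneg b).isSelfAdjoint.star_eq,
    ← mul_assoc, mul_assoc (sqrt a) (sqrt b), sqrt_mul_sqrt_self b]

end CFC

section psdSqrt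

variable {n : ℕ} {A : Matrix (Fin n) (Fin n) ℝ}

lemma psdSqrt_eq_cfcSqrt (hA : A.PosSemidef) : psdSqrt A = CFC.sqrt A := by
  rw [CFC.sqrt_eq_real_sqrt A hA.nonneg, cfcₙ_eq_cfc, hA.1.cfc_eq, IsHermitian.cfc, psdSqrt,
    dif_pos hA]
  rfl

lemma trace_psdSqrt (hA : A.PosSemidef) : (psdSqrt A).trace = ∑ i, √(hA.1.eigenvalues i) := by
  rw [psdSqrt, dif_pos hA, trace_mul_cycle, Unitary.coe_star_mul_self, one_mul, trace_diagonal]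
  rfl

end psdSqrt

/-- For real symmetric PSD matrices `A`, `B`:
`tr((A^{1/2} B A^{1/2})^{1/2}) ≥ tr(B^{1/2} A^{1/2})`. -/
theorem trace_sqrt_ge_trace_sqrt_mul_sqrt {n : ℕ}
    (A B : Matrix (Fin n) (Fin n) ℝ) (hA : A.PosSemidef) (hB : B.PosSemidef) :
    (psdSqrt (psdSqrt A * B * psdSqrt A)).trace ≥ (psdSqrt B * psdSqrt A).trace := by
  rw [ge_iff_le, psdSqrt_eq_cfcSqrt hA, psdSqrt_eq_cfcSqrt hB,
    CFC.sqrt_mul_mul_sqrt_eq_star_mul_self A B hB.nonneg, star_eq_conjTranspose,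
    trace_psdSqrt (posSemidef_conjTranspose_mul_self _)]
  exact re_trace_le_sum_sqrt_eigenvalues (CFC.sqrt B * CFC.sqrt A)
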